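/- Let M = (G,𝐑,π) be a Moser–Tardos tuple with G a finite digraph. Call a tree of a landscape's forest airborne if its root has level > 0, and write Trees^∨(L) for the set of airborne trees of L. If L is a finalised M-landscape with |Trees^∨(L)| > 0, then there exists a finalised M-landscape L′ equivalent to L with |Trees^∨(L′)| < |Trees^∨(L)|. -/

import Mathlib

open MeasureTheory
open scoped Classical ENNReal

namespace MTLLL

variable {V : Type*} {ι : Type*}

/-- The out-neighbourhood `Var(x)` of a vertex `x` in the digraph with edge relation `E`. -/
def Var (E : V → V → Prop) (x : V) : Set V := {y | E x y}

/-- The in-neighbourhood `Cl(x)`. -/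
def Cl (E : V → V → Prop) (x : V) : Set V := {y | E y x}

/-- The neighbourhood `N(x) = Var(x) ∪ Cl(x)`. -/
def Nbr (E : V → V → Prop) (x : V) : Set V := Var E x ∪ Cl E x

/-- The maximal vertex degree of a digraph, as an extended natural number. -/
noncomputable def maxdeg (E : V → V → Prop) : ℕ∞ := ⨆ x : V, (Nbr E x).encard

/-- The digraph `Rel(G)`: edges join vertices whose out-neighbourhoods intersect. -/
def Rel (E : V → V → Prop) (x y : V) : Prop := (Var E x ∩ Var E y).Nonempty

/-- A set is independent in a digraph if no edge other than a self-loop joins two of its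
elements. -/
def Indep (E : V → V → Prop) (I : Set V) : Prop :=
  ∀ x ∈ I, ∀ y ∈ I, x ≠ y → ¬ E x y

/-- `I` is a maximal independent subset of `X`. -/
def MaxIndepIn (E : V → V → Prop) (X I : Set V) : Prop :=
  I ⊆ X ∧ Indep E I ∧ ∀ J : Set V, I ⊆ J → J ⊆ X → Indep E J → J = I

/-- A local rule: for each vertex `x` a set of colourings of `Var(x)` by `b` colours,
imposing no restriction when `Var(x)` is empty. -/
structure LocalRule (E : V → V → Prop) (b : ℕ) where
  R : ∀ x : V, Set (Var E x → Fin b)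
  isFull_of_empty : ∀ x : V, Var E x = ∅ → R x = Set.univ

/-- The complement rule `𝐑ᶜ(x)`. -/
def LocalRule.Rc {E : V → V → Prop} {b : ℕ} (R : LocalRule E b) (x : V) :
    Set (Var E x → Fin b) := (R.R x)ᶜ

/-- A colouring satisfies the rule if at every vertex its restriction to `Var(x)` obeys
`𝐑(x)`. -/
def Satisfies (E : V → V → Prop) {b : ℕ} (R : LocalRule E b) (f : V → Fin b) : Prop :=
  ∀ x : V, (fun y : Var E x => f y.1) ∈ R.R x

/-- The bad set `B(f)` of clauses violated by `f`. -/
def bad (E : V → V → Prop) {b : ℕ} (R : LocalRule E b) (f : V → Fin b) : Set V :=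
  {x : V | (fun y : Var E x => f y.1) ∈ R.Rc x}

/-- The symmetrisation of the digraph, with loops removed, as a simple graph;
it is used to measure graph distances. -/
def toSG (E : V → V → Prop) : SimpleGraph V where
  Adj x y := x ≠ y ∧ (E x y ∨ E y x)
  symm := ⟨fun x y h => ⟨Ne.symm h.1, h.2.symm⟩⟩
  loopless := ⟨fun x h => h.1 rfl⟩

/-- The ball of radius `r` around `x` in graph distance (ignoring orientations). -/
def ball (E : V → V → Prop) (x : V) (r : ℕ) : Set V :=
  {y | ∃ p : (toSG E).Walk x y, p.length ≤ r}

/-- The class `subexp(R,ε,d)`: max degree at most `d` and balls of radius `3R` of size at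
most `(1+ε)^R`. -/
def Subexp (E : V → V → Prop) (Rad d : ℕ) (ε : ℝ) : Prop :=
  maxdeg E ≤ (d : ℕ∞) ∧
  ∀ x : V, (ball E x (3 * Rad)).Finite ∧ ((ball E x (3 * Rad)).ncard : ℝ) ≤ (1 + ε) ^ Rad

/-- A partition (encoded by the map sending a vertex to its part) is `r`-sparse if distinct
vertices in the same part are at graph distance greater than `2r`. -/
def Sparse (E : V → V → Prop) (part : V → ι) (r : ℕ) : Prop :=
  ∀ x y : V, part x = part y → x ≠ y → y ∉ ball E x (2 * r)

/-- An independence function: `I X` is always a maximal independent subset of `X`. -/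
def IndepFun (E : V → V → Prop) (I : Set V → Set V) : Prop :=
  ∀ X : Set V, MaxIndepIn E X (I X)

/-- `Var` of a set of vertices. -/
def VarSet (E : V → V → Prop) (A : Set V) : Set V := ⋃ x ∈ A, Var E x

/-- One run of the Moser–Tardos algorithm: `(mtAux j).1 = MT^j` and `(mtAux j).2 = h^{j+1}`. -/
noncomputable def mtAux (E : V → V → Prop) {b : ℕ} (R : LocalRule E b)
    (part : V → ι) (I : Set V → Set V) (rnd : ι × ℕ → Fin b) :
    ℕ → (V → Fin b) × (V → ℕ)
  | 0 => (fun x => rnd (part x, 0), fun _ => 1)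
  | j + 1 =>
    let p := mtAux E R part I rnd j
    (fun x => if x ∈ VarSet E (I (bad E R p.1)) then rnd (part x, p.2 x) else p.1 x,
     fun x => if x ∈ VarSet E (I (bad E R p.1)) then p.2 x + 1 else p.2 x)

/-- The colouring `MT^j` produced by the Moser–Tardos algorithm. -/
noncomputable def MT (E : V → V → Prop) {b : ℕ} (R : LocalRule E b)
    (part : V → ι) (I : Set V → Set V) (rnd : ι × ℕ → Fin b) (j : ℕ) : V → Fin b :=
  (mtAux E R part I rnd j).1

/-- The resampling counters `h^k`. -/
noncomputable def hres (E : V → V → Prop) {b : ℕ} (R : LocalRule E b)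
    (part : V → ι) (I : Set V → Set V) (rnd : ι × ℕ → Fin b) : ℕ → V → ℕ
  | 0 => fun _ => 0
  | j + 1 => (mtAux E R part I rnd j).2

/-- The total number `h^∞(x)` of resamplings at `x`. -/
noncomputable def hinf (E : V → V → Prop) {b : ℕ} (R : LocalRule E b)
    (part : V → ι) (I : Set V → Set V) (rnd : ι × ℕ → Fin b) (x : V) : ℕ∞ :=
  ⨆ k : ℕ, (hres E R part I rnd k x : ℕ∞)

/-- `μ` is the product over `ι × ℕ` of uniform measures on `Fin b`: it is a probability
measure giving each cylinder set its natural measure. -/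
def IsUnifProduct {ι : Type*} (b : ℕ) (μ : Measure ((ι × ℕ) → Fin b)) : Prop :=
  IsProbabilityMeasure μ ∧
  ∀ (s : Finset (ι × ℕ)) (g : (ι × ℕ) → Fin b),
    μ {rnd | ∀ p ∈ s, rnd p = g p} = (1 / (b : ℝ≥0∞)) ^ s.card

end MTLLL
namespace MTLLL

variable {V : Type*} {ι : Type*}

/-- A `G`-forest: a subdigraph of `Canvas(G)` (vertices `V × ℕ`, edges going up one level
between `Rel`-adjacent vertices) in which every vertex has in-degree `0` or `1`. -/
structure GForest (E : V → V → Prop) where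
  verts : Set (V × ℕ)
  edges : V × ℕ → V × ℕ → Prop
  edges_mem_left : ∀ a c : V × ℕ, edges a c → a ∈ verts
  edges_mem_right : ∀ a c : V × ℕ, edges a c → c ∈ verts
  edges_rel : ∀ a c : V × ℕ, edges a c → Rel E a.1 c.1
  edges_level : ∀ a c : V × ℕ, edges a c → c.2 = a.2 + 1
  indeg_le_one : ∀ c a a' : V × ℕ, edges a c → edges a' c → a = a'

/-- A forest is grounded if every root (in-degree `0` vertex) has level `0`. -/
def GForest.Grounded {E : V → V → Prop} (F : GForest E) : Prop :=
  ∀ a ∈ F.verts, (∀ a' : V × ℕ, ¬ F.edges a' a) → a.2 = 0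

/-- A forest has finite height if its levels are bounded. -/
def GForest.FinHeight {E : V → V → Prop} (F : GForest E) : Prop :=
  ∃ j : ℕ, ∀ a ∈ F.verts, a.2 < j

/-- A forest is independent if each of its level sets is independent in `Rel(G)`. -/
def GForest.LevelIndep {E : V → V → Prop} (F : GForest E) : Prop :=
  ∀ i : ℕ, Indep (Rel E) {x : V | (x, i) ∈ F.verts}

/-- `varcount(F) = |V(G)| + Σ_{(x,i) ∈ V(F)} |Var(x)|`. -/
noncomputable def GForest.varcount {E : V → V → Prop} (F : GForest E) : ℕ :=
  Nat.card V + ∑ᶠ a ∈ F.verts, (Var E (Prod.fst a)).ncard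

/-- The set of roots of airborne trees (trees whose root has positive level). -/
def airborneRoots {E : V → V → Prop} (F : GForest E) : Set (V × ℕ) :=
  {a ∈ F.verts | (∀ a' : V × ℕ, ¬ F.edges a' a) ∧ 0 < a.2}

/-- A finalised `M`-landscape: an independent `G`-forest of finite height together with a
violation datum `vio (x,i) ∈ 𝐑ᶜ(x)` at each of its vertices, and a final colouring. -/
structure FinLandscape (E : V → V → Prop) (b : ℕ) (R : LocalRule E b) where
  F : GForest E
  levelIndep : F.LevelIndep
  finHeight : F.FinHeight
  vio : ∀ a : F.verts, Var E (a : V × ℕ).1 → Fin b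
  vio_not_mem : ∀ a : F.verts, vio a ∈ R.Rc (a : V × ℕ).1
  fin : V → Fin b

/-- The sequence `Used_L(x)`: the values `vio(y,s)(x)` over the (at most one per level)
vertices `(y,s)` of the forest with `x ∈ Var(y)`, in increasing order of level, followed by
the final value `fin x`. -/
noncomputable def FinLandscape.Used {E : V → V → Prop} {b : ℕ} {R : LocalRule E b}
    (L : FinLandscape E b R) (x : V) : List (Fin b) :=
  ((List.range (Nat.find L.finHeight)).filterMap fun i =>
    if h : ∃ y : V, ∃ _ : (y, i) ∈ L.F.verts, x ∈ Var E y then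
      some (L.vio ⟨(h.choose, i), h.choose_spec.choose⟩ ⟨x, h.choose_spec.choose_spec⟩)
    else none) ++ [L.fin x]

/-- The finalised landscape `L^k` associated to a run of the Moser–Tardos algorithm
(relative to a linear order used to pick parents in the forest). -/
noncomputable def runLandscape (E : V → V → Prop) {b : ℕ} (R : LocalRule E b)
    (part : V → ι) {I : Set V → Set V} (hI : IndepFun (Rel E) I)
    (rnd : ι × ℕ → Fin b) (lo : LinearOrder V) (k : ℕ) :
    FinLandscape E b R where
  F :=
    { verts := {a : V × ℕ | a.2 < k ∧ a.1 ∈ I (bad E R (MT E R part I rnd a.2))}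
      edges := fun a c =>
        (c.2 < k ∧ c.1 ∈ I (bad E R (MT E R part I rnd c.2))) ∧ c.2 = a.2 + 1 ∧
        (a.1 ∈ I (bad E R (MT E R part I rnd a.2)) ∧ (Var E a.1 ∩ Var E c.1).Nonempty) ∧
        ∀ z : V, z ∈ I (bad E R (MT E R part I rnd a.2)) →
          (Var E z ∩ Var E c.1).Nonempty → lo.le a.1 z
      edges_mem_left := by
        rintro a c ⟨⟨hck, -⟩, hlev, ⟨haI, -⟩, -⟩
        exact ⟨by omega, haI⟩
      edges_mem_right := fun a c h => h.1
      edges_rel := fun a c h => h.2.2.1.2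
      edges_level := fun a c h => h.2.1
      indeg_le_one := by
        rintro c a a' ⟨-, hlev, ⟨haI, haV⟩, hmin⟩ ⟨-, hlev', ⟨haI', haV'⟩, hmin'⟩
        have h2 : a.2 = a'.2 := by omega
        rw [h2] at haI hmin
        have h1 : a.1 = a'.1 := lo.le_antisymm _ _ (hmin _ haI' haV') (hmin' _ haI haV)
        exact Prod.ext h1 h2 }
  levelIndep := by
    intro i x hx y hy hxy
    exact (hI (bad E R (MT E R part I rnd i))).2.1 x hx.2 y hy.2 hxy
  finHeight := ⟨k, fun a ha => ha.1⟩
  vio := fun a => fun y => MT E R part I rnd (a : V × ℕ).2 y.1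
  vio_not_mem := fun a => (hI (bad E R (MT E R part I rnd (a : V × ℕ).2))).1 a.2.2
  fin := MT E R part I rnd k

end MTLLL

/-!
`Used_L(x)` only records, for each `x`, the order by level of the vertices whose `Var` contains
`x`, and any two such vertices are `Rel`-adjacent. Hence moving the vertices to new levels, keeping
their violation data, gives an equivalent landscape as long as `Rel`-adjacent vertices keep their
relative order. Move each vertex to its depth, the length of the longest chain of `Rel`-adjacent
vertices of increasing level ending at it. A vertex of positive depth has a `Rel`-neighbour of
depth one less, which becomes its parent, so the settled landscape is grounded and has no
airborne trees at all.
-/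

theorem List.filterMap_range_eq_of_strictMonoOn {α : Type*} {f g : ℕ → Option α}
    {σ : ℕ → ℕ} (hσ : StrictMonoOn σ {i | (f i).isSome}) {N M : ℕ}
    (hfg : ∀ i < N, (f i).isSome → σ i < M ∧ g (σ i) = f i)
    (hgf : ∀ j < M, (g j).isSome → ∃ i < N, (f i).isSome ∧ σ i = j) :
    (List.range N).filterMap f = (List.range M).filterMap g := by
  induction N generalizing M with
  | zero =>
    refine (List.filterMap_eq_nil_iff.2 fun j hj => ?_).symm
    by_contra hgj
    obtain ⟨i, hi, -⟩ := hgf j (List.mem_range.1 hj) (Option.ne_none_iff_isSome.1 hgj)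
    exact Nat.not_lt_zero i hi
  | succ N ih =>
    rw [List.range_succ, List.filterMap_append]
    cases hfN : f N with
    | none =>
      rw [List.filterMap_cons_none hfN, List.filterMap_nil, List.append_nil]
      refine ih (fun i hi => hfg i (by omega)) fun j hj hgj => ?_
      obtain ⟨i, hi, hfi, rfl⟩ := hgf j hj hgj
      refine ⟨i, lt_of_le_of_ne (Nat.le_of_lt_succ hi) ?_, hfi, rfl⟩
      rintro rfl
      simp [hfN] at hfi
    | some v =>
      have hN : (f N).isSome := by simp [hfN]
      obtain ⟨hmM, hgm⟩ := hfg N (Nat.lt_succ_self N) hN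
      have hlt : ∀ i < N, (f i).isSome → σ i < σ N := fun i hi hfi => hσ hfi hN hi
      have hgap : ∀ j, σ N < j → j < M → g j = none := by
        intro j hmj hjM
        by_contra hgj
        obtain ⟨i, hi, hfi, rfl⟩ := hgf j hjM (Option.ne_none_iff_isSome.1 hgj)
        rcases Nat.lt_succ_iff_lt_or_eq.1 hi with hi | rfl
        · exact absurd (hlt i hi hfi) (not_lt.2 hmj.le)
        · exact lt_irrefl _ hmj
      have hsplit : List.range M =
          List.range (σ N) ++ [σ N] ++ (List.range (M - (σ N + 1))).map (σ N + 1 + ·) := by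
        rw [← List.range_succ, ← List.range_add]
        congr 1
        omega
      have htail : ((List.range (M - (σ N + 1))).map (σ N + 1 + ·)).filterMap g = [] := by
        refine List.filterMap_eq_nil_iff.2 fun j hj => ?_
        obtain ⟨k, hk, rfl⟩ := List.mem_map.1 hj
        exact hgap _ (by omega) (by have := List.mem_range.1 hk; omega)
      rw [hsplit, List.filterMap_append, List.filterMap_append, htail, List.append_nil,
        List.filterMap_cons_some hfN, List.filterMap_cons_some (hgm.trans hfN)]
      congr 1
      refine ih (fun i hi hfi => ⟨hlt i hi hfi, (hfg i (by omega) hfi).2⟩) fun j hj hgj => ?_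
      obtain ⟨i, hi, hfi, rfl⟩ := hgf j (by omega) hgj
      refine ⟨i, lt_of_le_of_ne (Nat.le_of_lt_succ hi) ?_, hfi, rfl⟩
      rintro rfl
      exact lt_irrefl _ hj

namespace MTLLL

variable {V : Type*} {E : V → V → Prop} {b : ℕ} {R : LocalRule E b}

theorem Rel.symm {x y : V} (h : Rel E x y) : Rel E y x := by
  obtain ⟨w, hx, hy⟩ := h
  exact ⟨w, hy, hx⟩

namespace FinLandscape

variable (L : FinLandscape E b R)

theorem var_nonempty {u : V × ℕ} (hu : u ∈ L.F.verts) : (Var E u.1).Nonempty := by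
  by_contra h
  have hvio := L.vio_not_mem ⟨u, hu⟩
  rw [LocalRule.Rc, R.isFull_of_empty _ (Set.not_nonempty_iff_eq_empty.1 h)] at hvio
  exact hvio (Set.mem_univ _)

theorem rel_self {u : V × ℕ} (hu : u ∈ L.F.verts) : Rel E u.1 u.1 :=
  let ⟨y, hy⟩ := L.var_nonempty hu
  ⟨y, hy, hy⟩

theorem eq_of_mem_var {x y y' : V} {i : ℕ} (hy : (y, i) ∈ L.F.verts)
    (hy' : (y', i) ∈ L.F.verts) (hx : x ∈ Var E y) (hx' : x ∈ Var E y') : y = y' := by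
  by_contra hne
  exact L.levelIndep i y hy y' hy' hne ⟨x, hx, hx'⟩

theorem vio_congr_level {y : V} {i i' : ℕ} (h : i = i') (hi : (y, i) ∈ L.F.verts)
    (hi' : (y, i') ∈ L.F.verts) (x : Var E y) :
    L.vio ⟨(y, i), hi⟩ x = L.vio ⟨(y, i'), hi'⟩ x := by
  subst h
  rfl

noncomputable def entry (x : V) (i : ℕ) : Option (Fin b) :=
  if h : ∃ y : V, ∃ _ : (y, i) ∈ L.F.verts, x ∈ Var E y then
    some (L.vio ⟨(h.choose, i), h.choose_spec.choose⟩ ⟨x, h.choose_spec.choose_spec⟩)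
  else none

theorem used_eq (x : V) :
    L.Used x = (List.range (Nat.find L.finHeight)).filterMap (L.entry x) ++ [L.fin x] := rfl

theorem entry_eq_some {x y : V} {i : ℕ} (hy : (y, i) ∈ L.F.verts) (hx : x ∈ Var E y) :
    L.entry x i = some (L.vio ⟨(y, i), hy⟩ ⟨x, hx⟩) := by
  have h : ∃ y : V, ∃ _ : (y, i) ∈ L.F.verts, x ∈ Var E y := ⟨y, hy, hx⟩
  have hchoose : h.choose = y :=
    L.eq_of_mem_var h.choose_spec.choose hy h.choose_spec.choose_spec hx
  rw [entry, dif_pos h]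
  congr 1
  subst hchoose
  rfl

theorem isSome_entry {x : V} {i : ℕ} :
    (L.entry x i).isSome ↔ ∃ y : V, (y, i) ∈ L.F.verts ∧ x ∈ Var E y := by
  unfold entry
  split_ifs with h
  · simpa using h
  · simpa using h

theorem level_lt_of_mem {u : V × ℕ} (hu : u ∈ L.F.verts) : u.2 < Nat.find L.finHeight :=
  Nat.find_spec L.finHeight u hu

variable [Fintype V]

noncomputable def depth (u : V × ℕ) : ℕ :=
  ((Finset.univ ×ˢ Finset.range u.2).filter fun v => v ∈ L.F.verts ∧ Rel E v.1 u.1).attach.sup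
    fun v => depth v.1 + 1
termination_by u.2
decreasing_by exact Finset.mem_range.1 (Finset.mem_product.1 (Finset.mem_filter.1 v.2).1).2

theorem depth_eq (u : V × ℕ) :
    L.depth u = ((Finset.univ ×ˢ Finset.range u.2).filter
      fun v => v ∈ L.F.verts ∧ Rel E v.1 u.1).sup fun v => L.depth v + 1 := by
  rw [depth, Finset.sup_attach (f := fun v => L.depth v + 1)]

theorem depth_lt_depth {u v : V × ℕ} (hv : v ∈ L.F.verts) (hrel : Rel E v.1 u.1)
    (hlt : v.2 < u.2) : L.depth v < L.depth u := by
  rw [L.depth_eq u]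
  refine Nat.lt_of_succ_le (Finset.le_sup (f := fun v => L.depth v + 1) ?_)
  simp [hv, hrel, hlt]

theorem exists_depth_add_one_eq {u : V × ℕ} (hu : 0 < L.depth u) :
    ∃ v ∈ L.F.verts, Rel E v.1 u.1 ∧ L.depth v + 1 = L.depth u := by
  rw [L.depth_eq u] at hu ⊢
  have hne : ((Finset.univ ×ˢ Finset.range u.2).filter
      fun v => v ∈ L.F.verts ∧ Rel E v.1 u.1).Nonempty := by
    by_contra h
    rw [Finset.not_nonempty_iff_eq_empty.1 h, Finset.sup_empty] at hu
    exact lt_irrefl 0 hu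
  obtain ⟨v, hv, hsup⟩ := Finset.exists_mem_eq_sup _ hne fun v => L.depth v + 1
  rw [Finset.mem_filter] at hv
  exact ⟨v, hv.2.1, hv.2.2, hsup.symm⟩

theorem depth_le_level (u : V × ℕ) : L.depth u ≤ u.2 := by
  induction hk : u.2 using Nat.strong_induction_on generalizing u with
  | _ k ih =>
    rw [L.depth_eq u]
    refine Finset.sup_le fun v hv => ?_
    have hvk : v.2 < k :=
      hk ▸ Finset.mem_range.1 (Finset.mem_product.1 (Finset.mem_filter.1 hv).1).2
    exact Nat.succ_le_of_lt ((ih v.2 hvk v rfl).trans_lt hvk)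

theorem level_eq_of_depth_eq {u v : V × ℕ} (hu : u ∈ L.F.verts) (hv : v ∈ L.F.verts)
    (hrel : Rel E u.1 v.1) (h : L.depth u = L.depth v) : u.2 = v.2 := by
  rcases lt_trichotomy u.2 v.2 with hlt | heq | hgt
  · exact absurd h (L.depth_lt_depth hu hrel hlt).ne
  · exact heq
  · exact absurd h (L.depth_lt_depth hv hrel.symm hgt).ne'


def settledVerts : Set (V × ℕ) :=
  {c | ∃ i, (c.1, i) ∈ L.F.verts ∧ L.depth (c.1, i) = c.2}

theorem settledVerts_eq_image : L.settledVerts = (fun u => (u.1, L.depth u)) '' L.F.verts := by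
  ext ⟨x, d⟩
  constructor
  · rintro ⟨i, hi, hd⟩
    exact ⟨(x, i), hi, Prod.ext rfl hd⟩
  · rintro ⟨⟨y, i⟩, hi, hyd⟩
    cases hyd
    exact ⟨i, hi, rfl⟩

theorem injOn_fst_depth : Set.InjOn (fun u => (u.1, L.depth u)) L.F.verts := by
  rintro ⟨x, i⟩ hi ⟨y, j⟩ hj h
  obtain ⟨rfl, hd⟩ := Prod.mk.inj h
  exact Prod.ext rfl (L.level_eq_of_depth_eq hi hj (L.rel_self hi) hd)

noncomputable def settledParent (u : V × ℕ) : V × ℕ :=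
  if h : ∃ v ∈ L.F.verts, Rel E v.1 u.1 ∧ L.depth v + 1 = L.depth u then h.choose else u

theorem settledParent_spec {u : V × ℕ} (hu : 0 < L.depth u) :
    L.settledParent u ∈ L.F.verts ∧ Rel E (L.settledParent u).1 u.1 ∧
      L.depth (L.settledParent u) + 1 = L.depth u := by
  have h := L.exists_depth_add_one_eq hu
  rw [settledParent, dif_pos h]
  exact h.choose_spec

noncomputable def settledForest : GForest E where
  verts := L.settledVerts
  edges p c := ∃ i, (c.1, i) ∈ L.F.verts ∧ L.depth (c.1, i) = c.2 ∧ 0 < c.2 ∧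
    p = ((L.settledParent (c.1, i)).1, L.depth (L.settledParent (c.1, i)))
  edges_mem_left := by
    rintro p c ⟨i, -, hd, hc, rfl⟩
    exact ⟨_, (L.settledParent_spec (hd ▸ hc)).1, rfl⟩
  edges_mem_right := fun _ _ ⟨i, hi, hd, _⟩ => ⟨i, hi, hd⟩
  edges_rel := by
    rintro p c ⟨i, -, hd, hc, rfl⟩
    exact (L.settledParent_spec (hd ▸ hc)).2.1
  edges_level := by
    rintro p c ⟨i, -, hd, hc, rfl⟩
    exact hd ▸ (L.settledParent_spec (hd ▸ hc)).2.2.symm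
  indeg_le_one := by
    rintro c p p' ⟨i, hi, hd, -, rfl⟩ ⟨i', hi', hd', -, rfl⟩
    obtain rfl : i = i' := L.level_eq_of_depth_eq hi hi' (L.rel_self hi) (hd.trans hd'.symm)
    rfl

noncomputable def settle : FinLandscape E b R where
  F := L.settledForest
  levelIndep := by
    rintro d x ⟨i, hi, hd⟩ y ⟨j, hj, hd'⟩ hne hrel
    obtain rfl : i = j := L.level_eq_of_depth_eq hi hj hrel (hd.trans hd'.symm)
    exact L.levelIndep i x hi y hj hne hrel
  finHeight := by
    obtain ⟨k, hk⟩ := L.finHeight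
    exact ⟨k, fun c ⟨i, hi, hd⟩ => hd ▸ (L.depth_le_level _).trans_lt (hk _ hi)⟩
  vio c := L.vio ⟨(c.1.1, c.2.choose), c.2.choose_spec.1⟩
  vio_not_mem c := L.vio_not_mem ⟨(c.1.1, c.2.choose), c.2.choose_spec.1⟩
  fin := L.fin

theorem settle_grounded : L.settle.F.Grounded := by
  rintro ⟨x, d⟩ ⟨i, hi, hd⟩ hroot
  by_contra hpos
  exact hroot _ ⟨i, hi, hd, Nat.pos_of_ne_zero hpos, rfl⟩

theorem settle_ncard : L.settle.F.verts.ncard = L.F.verts.ncard :=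
  (congrArg Set.ncard L.settledVerts_eq_image).trans L.injOn_fst_depth.ncard_image

theorem settle_vio {y : V} {i : ℕ} (hi : (y, i) ∈ L.F.verts)
    (hs : (y, L.depth (y, i)) ∈ L.settle.F.verts) (x : Var E y) :
    L.settle.vio ⟨(y, L.depth (y, i)), hs⟩ x = L.vio ⟨(y, i), hi⟩ x :=
  L.vio_congr_level (L.level_eq_of_depth_eq hs.choose_spec.1 hi (L.rel_self (u := (y, i)) hi)
    hs.choose_spec.2) _ _ x

theorem settle_entry {x y : V} {i : ℕ} (hi : (y, i) ∈ L.F.verts) (hx : x ∈ Var E y) :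
    L.settle.entry x (L.depth (y, i)) = L.entry x i := by
  have hs : (y, L.depth (y, i)) ∈ L.settle.F.verts := ⟨i, hi, rfl⟩
  rw [L.settle.entry_eq_some hs hx, L.entry_eq_some hi hx, L.settle_vio hi hs]

theorem settle_used : L.settle.Used = L.Used := by
  funext x
  let σ : ℕ → ℕ := fun i =>
    if h : ∃ y, (y, i) ∈ L.F.verts ∧ x ∈ Var E y then L.depth (h.choose, i) else 0
  have hσ : ∀ {y i}, (y, i) ∈ L.F.verts → x ∈ Var E y → σ i = L.depth (y, i) := by
    intro y i hi hx
    have h : ∃ y, (y, i) ∈ L.F.verts ∧ x ∈ Var E y := ⟨y, hi, hx⟩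
    simp only [σ, dif_pos h, L.eq_of_mem_var h.choose_spec.1 hi h.choose_spec.2 hx]
  rw [used_eq, used_eq]
  congr 1
  refine (List.filterMap_range_eq_of_strictMonoOn (σ := σ) ?_ ?_ ?_).symm
  · rintro i hi j hj hij
    obtain ⟨y, hyi, hxy⟩ := L.isSome_entry.1 hi
    obtain ⟨z, hzj, hxz⟩ := L.isSome_entry.1 hj
    rw [hσ hyi hxy, hσ hzj hxz]
    exact L.depth_lt_depth hyi ⟨x, hxy, hxz⟩ hij
  · intro i _ hi
    obtain ⟨y, hyi, hxy⟩ := L.isSome_entry.1 hi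
    rw [hσ hyi hxy]
    exact ⟨L.settle.level_lt_of_mem (u := (y, _)) ⟨i, hyi, rfl⟩, L.settle_entry hyi hxy⟩
  · intro j _ hj
    obtain ⟨y, ⟨i, hyi, hd⟩, hxy⟩ := L.settle.isSome_entry.1 hj
    exact ⟨i, L.level_lt_of_mem hyi, L.isSome_entry.2 ⟨y, hyi, hxy⟩, (hσ hyi hxy).trans hd⟩

end FinLandscape

theorem airborneRoots_eq_empty_of_grounded {F : GForest E} (hF : F.Grounded) :
    airborneRoots F = ∅ :=
  Set.eq_empty_of_forall_notMem fun a ⟨ha, hroot, hpos⟩ => hpos.ne' (hF a ha hroot)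

end MTLLL
open MTLLL in
theorem decrease_airborne_trees_general
    {V : Type*} [Fintype V] (E : V → V → Prop)
    (b : ℕ) (R : LocalRule E b) (L : FinLandscape E b R)
    (hpos : 0 < (airborneRoots L.F).ncard) :
    ∃ L' : FinLandscape E b R,
      (L'.F.verts.ncard = L.F.verts.ncard ∧ L'.Used = L.Used) ∧
      (airborneRoots L'.F).ncard < (airborneRoots L.F).ncard := by
  refine ⟨L.settle, ⟨L.settle_ncard, L.settle_used⟩, ?_⟩
  rwa [airborneRoots_eq_empty_of_grounded L.settle_grounded, Set.ncard_empty]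

open MTLLL in
/-- Lemma 3.10: a finalised landscape with at least one airborne tree (a tree whose root
has positive level; roots are the in-degree-zero vertices of the forest) is equivalent to
one with strictly fewer airborne trees. -/
theorem decrease_airborne_trees
    {V : Type*} [Nonempty V] [Fintype V] (E : V → V → Prop)
    (b : ℕ) (hb : 1 < b) (R : LocalRule E b) (L : FinLandscape E b R)
    (hpos : 0 < (airborneRoots L.F).ncard) :
    ∃ L' : FinLandscape E b R,
      (L'.F.verts.ncard = L.F.verts.ncard ∧ L'.Used = L.Used) ∧
      (airborneRoots L'.F).ncard < (airborneRoots L.F).ncard :=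
  decrease_airborne_trees_general E b R L hpos
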